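/- Uniform continuity of the ratio of renewal functions: let $L : [0,\infty) \to [1,\infty)$ be a continuous non-decreasing function with $L(0)=1$ and $\lim_{x \to \infty} L(x)/x = c_0$ for some $c_0 > 0$. Let $(c_n)$ and $(b_n)$ be sequences of positive reals with $c_n \to \infty$ and $c_n/\sqrt{b_n} \to 0$. Then $\sup_{x \ge c_n} \left| \frac{L((x - c_n)/\sqrt{b_n})}{L(x/\sqrt{b_n})} - 1 \right| \to 0$ as $n \to \infty$. -/

import Mathlib

/-!
Since `L x / x → c₀ ≠ 0`, the ratio `L (u - 1) / L u` tends to `1`, and by monotonicity it is a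
lower bound for `L (u - d) / L u ≤ 1` whenever `0 ≤ d ≤ 1`. So for large `u` the ratio is close
to `1` uniformly in small shifts `d`, while on the remaining compact interval uniform continuity
of `L` and `L ≥ 1` do the same. It remains to take `d = c n / √(b n) → 0` and `u = x / √(b n)`.
-/

open Filter Topology

theorem tendsto_comp_sub_one_div_self {L : ℝ → ℝ} {c0 : ℝ} (hc0 : c0 ≠ 0)
    (hlim : Tendsto (fun x => L x / x) atTop (𝓝 c0)) :
    Tendsto (fun u => L (u - 1) / L u) atTop (𝓝 1) := by
  have hshift : Tendsto (fun u => L (u - 1) / (u - 1)) atTop (𝓝 c0) :=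
    hlim.comp (tendsto_atTop_add_const_right _ (-1) tendsto_id)
  have hfrac : Tendsto (fun u : ℝ => (u - 1) / u) atTop (𝓝 1) := by
    have : Tendsto (fun u : ℝ => 1 - u⁻¹) atTop (𝓝 1) := by
      simpa using tendsto_inv_atTop_zero.const_sub (1 : ℝ)
    refine this.congr' ?_
    filter_upwards [eventually_gt_atTop 0] with u hu
    field_simp
  have := (hshift.mul hfrac).div hlim hc0
  rw [mul_one, div_self hc0] at this
  refine this.congr' ?_
  filter_upwards [eventually_gt_atTop 1] with u hu
  have : u - 1 ≠ 0 := by linarith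
  simp only [Pi.div_apply]
  field_simp

theorem exists_pos_abs_comp_sub_div_sub_one_le {L : ℝ → ℝ} {c0 : ℝ}
    (hcont : ContinuousOn L (Set.Ici 0)) (hmono : MonotoneOn L (Set.Ici 0))
    (hL1 : ∀ x ≥ (0 : ℝ), 1 ≤ L x) (hc0 : c0 ≠ 0)
    (hlim : Tendsto (fun x => L x / x) atTop (𝓝 c0)) {ε : ℝ} (hε : 0 < ε) :
    ∃ δ > 0, ∀ d u, 0 ≤ d → d ≤ δ → d ≤ u → |L (u - d) / L u - 1| ≤ ε := by
  obtain ⟨M, hM⟩ := eventually_atTop.1 <|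
    (tendsto_comp_sub_one_div_self hc0 hlim).eventually (lt_mem_nhds (sub_lt_self 1 hε))
  have hUC : UniformContinuousOn L (Set.Icc 0 (max M 1)) :=
    isCompact_Icc.uniformContinuousOn_of_continuous (hcont.mono fun _ hx => hx.1)
  obtain ⟨δ, hδ, hclose⟩ := Metric.uniformContinuousOn_iff_le.1 hUC ε hε
  refine ⟨min δ 1, lt_min hδ one_pos, fun d u hd hdδ hdu => ?_⟩
  have hu : 0 ≤ u := hd.trans hdu
  have hud : 0 ≤ u - d := sub_nonneg.2 hdu
  have hLu : 0 < L u := one_pos.trans_le (hL1 u hu)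
  have hle : L (u - d) ≤ L u := hmono hud hu (sub_le_self u hd)
  suffices hlow : 1 - ε ≤ L (u - d) / L u by
    rw [abs_le]
    constructor
    · linarith
    · linarith [(div_le_one hLu).2 hle]
  rcases le_or_gt (max M 1) u with huM | huM
  · calc 1 - ε ≤ L (u - 1) / L u := (hM u (le_of_max_le_left huM)).le
      _ ≤ L (u - d) / L u := by
        gcongr
        exact hmono (sub_nonneg.2 (le_of_max_le_right huM)) hud
          (by linarith [min_le_right δ 1])
  · have hdist : dist (u - d) u ≤ δ := by
      rw [dist_comm, Real.dist_eq, sub_sub_cancel, abs_of_nonneg hd]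
      exact hdδ.trans (min_le_left δ 1)
    have := hclose (u - d) ⟨hud, by linarith⟩ u ⟨hu, huM.le⟩ hdist
    rw [dist_comm, Real.dist_eq, abs_of_nonneg (sub_nonneg.2 hle)] at this
    rw [le_div_iff₀ hLu]
    nlinarith [hL1 u hu]

theorem stmt7_general (L : ℝ → ℝ)
    (hcont : ContinuousOn L (Set.Ici 0))
    (hmono : MonotoneOn L (Set.Ici 0))
    (hL1 : ∀ x ≥ (0 : ℝ), 1 ≤ L x)
    (c0 : ℝ) (hc0 : 0 < c0)
    (hlim : Tendsto (fun x => L x / x) atTop (nhds c0))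
    (c b : ℕ → ℝ) (hcpos : ∀ n, 0 < c n)
    (hratio : Tendsto (fun n => c n / Real.sqrt (b n)) atTop (nhds 0)) :
    ∀ ε > (0 : ℝ), ∃ N : ℕ, ∀ n ≥ N, ∀ x ≥ c n,
      |L ((x - c n) / Real.sqrt (b n)) / L (x / Real.sqrt (b n)) - 1| ≤ ε := by
  intro ε hε
  obtain ⟨δ, hδ, hshift⟩ := exists_pos_abs_comp_sub_div_sub_one_le hcont hmono hL1 hc0.ne' hlim hε
  obtain ⟨N, hN⟩ := eventually_atTop.1 (hratio.eventually (ge_mem_nhds hδ))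
  refine ⟨N, fun n hn x hx => ?_⟩
  rw [sub_div]
  exact hshift _ _ (div_nonneg (hcpos n).le (Real.sqrt_nonneg _)) (hN n hn)
    (div_le_div_of_nonneg_right hx (Real.sqrt_nonneg _))

/-- Uniform continuity of the ratio of renewal functions: if `L` is continuous,
non-decreasing, bounded below by `1`, `L(0) = 1` and `L(x) ~ c₀ x` at infinity, and
`c n → ∞`, `b n → ∞`, `c n / √(b n) → 0`, then
`sup_{x ≥ c n} |L((x - c n)/√(b n)) / L(x/√(b n)) - 1| → 0`. -/
theorem stmt7 (L : ℝ → ℝ)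
    (hcont : ContinuousOn L (Set.Ici 0))
    (hmono : MonotoneOn L (Set.Ici 0))
    (hL1 : ∀ x ≥ (0 : ℝ), 1 ≤ L x)
    (hL0 : L 0 = 1)
    (c0 : ℝ) (hc0 : 0 < c0)
    (hlim : Tendsto (fun x => L x / x) atTop (nhds c0))
    (c b : ℕ → ℝ) (hcpos : ∀ n, 0 < c n) (hbpos : ∀ n, 0 < b n)
    (hc : Tendsto c atTop atTop) (hb : Tendsto b atTop atTop)
    (hratio : Tendsto (fun n => c n / Real.sqrt (b n)) atTop (nhds 0)) :
    ∀ ε > (0 : ℝ), ∃ N : ℕ, ∀ n ≥ N, ∀ x ≥ c n,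
      |L ((x - c n) / Real.sqrt (b n)) / L (x / Real.sqrt (b n)) - 1| ≤ ε :=
  stmt7_general L hcont hmono hL1 c0 hc0 hlim c b hcpos hratio
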